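/- Let h be as follows: h(a) = a^s and h(b) = a^{γ_1} b a^{α_1} b ⋯ b a^{α_{p-1}} b a^{γ_2} with s ≥ 1, p ≥ 2, exponents nonnegative. If the infinite word w = ω(h) is eventually periodic, then γ_1 = γ_2 = 0 and α_1 = α_2 = ⋯ = α_{p-1}. -/

import Mathlib

/-- Words over the binary alphabet: `false` is the letter `a`, `true` is the letter `b`. -/
abbrev Word := List Bool

/-- The morphism of the free monoid determined by the images `g` of the letters. -/
def applyG (g : Bool → Word) (w : Word) : Word := w.flatMap g

/-- `a^n`. -/
def rep (n : ℕ) : Word := List.replicate n false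

/-- `b a^{α 1} b a^{α 2} ⋯ b a^{α (p-1)} b`, a word with `p` occurrences of `b`. -/
def blockWord (p : ℕ) (α : ℕ → ℕ) : Word :=
  ((List.range (p - 1)).flatMap fun i => true :: rep (α (i + 1))) ++ [true]

/-- `w^k`. -/
def wordPow (w : Word) (k : ℕ) : Word := (List.replicate k w).flatten

/-- `u` and `v` are `a`-conjugates. -/
def AConj (u v : Word) : Prop :=
  ∃ p q r s : ℕ, ∃ w : Word,
    u = rep p ++ w ++ rep q ∧ v = rep r ++ w ++ rep s ∧ p + q = r + s

/-- `w` is the infinite word `ω(g)`: for every `n`, the word obtained from `g^n(b)` by deleting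
all occurrences of `a` preceding the first occurrence of `b` is a prefix of `w`. -/
def IsOmega (g : Bool → Word) (w : ℕ → Bool) : Prop :=
  ∀ n k : ℕ, ∀ hk : k < (((applyG g)^[n] [true]).dropWhile (fun x => !x)).length,
    (((applyG g)^[n] [true]).dropWhile (fun x => !x)).get ⟨k, hk⟩ = w k

/-- `Aw w i` (for `i ≥ 1`): the number of occurrences of `a` in `w` strictly between the
`i`-th and `(i+1)`-th occurrences of `b` in `w`. -/
noncomputable def Aw (w : ℕ → Bool) (i : ℕ) : ℕ :=
  Nat.nth (fun n => w n = true) i - Nat.nth (fun n => w n = true) (i - 1) - 1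

/-!
The gaps `G = gapSeq s p (γ₁ + γ₂) α` of `ω(h)` satisfy `G (p j) = γ₁ + γ₂ + s G j` and
`G n = α (n mod p)` for `p ∤ n`: `h` turns the `j`-th `b` into `p` consecutive `b`s separated by
`α₁, …, α_{p-1}`, and the gap after the `j`-th `b` into the gap after the `(p j)`-th one.

If `ω(h)` is eventually `d`-periodic, so is the set of positions of its `b`s, and then eventually
`G n < d` and `G (n + t) = G n` for some `t ≥ 1`. As `G (p ^ K) ≥ K (γ₁ + γ₂)`, boundedness forces
`γ₁ = γ₂ = 0`, and then `G (p ^ K i) = s ^ K α i` for `0 < i < p`. Writing `t = p ^ e r` with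
`p ∤ r`, the shift by `t` sends `p ^ K i` to `p ^ e (p ^ (K - e) i + r)`, so
`s ^ K α i = s ^ e α (r mod p)` for every large `K` and every `0 < i < p`.
-/

theorem rep_add (m n : ℕ) : rep (m + n) = rep m ++ rep n := List.replicate_add ..

theorem applyG_append (g : Bool → Word) (u v : Word) :
    applyG g (u ++ v) = applyG g u ++ applyG g v :=
  List.flatMap_append

theorem applyG_rep {g : Bool → Word} {s : ℕ} (ha : g false = rep s) (n : ℕ) :
    applyG g (rep n) = rep (s * n) := by
  induction n with
  | zero => rfl
  | succ n ih =>
    rw [rep, List.replicate_succ', ← rep, applyG_append, ih, mul_add_one, rep_add]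
    simp [applyG, ha]

def ofGaps (gs : List ℕ) : Word := gs.flatMap (fun g => true :: rep g) ++ [true]

theorem ofGaps_cons (k : ℕ) (gs : List ℕ) : ofGaps (k :: gs) = true :: (rep k ++ ofGaps gs) := by
  simp [ofGaps]

theorem ofGaps_append_cons (u v : List ℕ) (k : ℕ) :
    ofGaps (u ++ k :: v) = ofGaps u ++ rep k ++ ofGaps v := by
  simp [ofGaps]

theorem blockWord_eq_ofGaps (p : ℕ) (α : ℕ → ℕ) :
    blockWord p α = ofGaps ((List.range' 1 (p - 1)).map α) := by
  rw [blockWord, ofGaps, List.flatMap_map, List.range'_eq_map_range, List.flatMap_map]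
  simp only [add_comm 1]

theorem applyG_ofGaps {g : Bool → Word} {s c₁ c₂ : ℕ} {as : List ℕ} (ha : g false = rep s)
    (hb : g true = rep c₁ ++ ofGaps as ++ rep c₂) (gs : List ℕ) :
    applyG g (ofGaps gs) =
      rep c₁ ++ ofGaps (as ++ gs.flatMap fun k => (c₁ + c₂ + s * k) :: as) ++ rep c₂ := by
  induction gs with
  | nil => simp [ofGaps, applyG, hb]
  | cons k gs ih =>
    have hgap : rep (c₁ + c₂ + s * k) = rep c₂ ++ rep (s * k) ++ rep c₁ := by
      rw [← rep_add, ← rep_add]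
      congr 1
      ring
    rw [ofGaps_cons, List.flatMap_cons, List.cons_append, ofGaps_append_cons, hgap,
      ← List.singleton_append, applyG_append, applyG_append, applyG_rep ha, ih]
    simp [applyG, hb]

theorem dropWhile_rep_append_ofGaps (L : ℕ) (gs : List ℕ) (v : Word) :
    (rep L ++ ofGaps gs ++ v).dropWhile (fun x => !x) = ofGaps gs ++ v := by
  obtain ⟨u, hu⟩ : ∃ u, ofGaps gs = true :: u := by
    cases gs <;> simp [ofGaps]
  induction L with
  | zero => simp [rep, hu]
  | succ L ih => simpa [rep, List.replicate_succ] using ih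

/-- `gapSeq s p (γ₁ + γ₂) α n` is the number of `a`s between the `n`-th and `(n+1)`-th `b` of
`ω(h)` when `n ≥ 1`; the value at `0` is junk. -/
def gapSeq (s p γ : ℕ) (α : ℕ → ℕ) (n : ℕ) : ℕ :=
  if 0 < n ∧ 1 < p ∧ p ∣ n then γ + s * gapSeq s p γ α (n / p) else α (n % p)
termination_by n
decreasing_by
  obtain ⟨hn, hp, -⟩ := ‹0 < n ∧ 1 < p ∧ p ∣ n›
  exact Nat.div_lt_self hn hp

section gapSeq

variable {s p γ : ℕ} {α : ℕ → ℕ}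

theorem gapSeq_mul (hp : 1 < p) {n : ℕ} (hn : 0 < n) :
    gapSeq s p γ α (p * n) = γ + s * gapSeq s p γ α n := by
  rw [gapSeq, if_pos ⟨by positivity, hp, dvd_mul_right p n⟩,
    Nat.mul_div_cancel_left n (by omega)]

theorem gapSeq_of_not_dvd {n : ℕ} (hn : ¬p ∣ n) : gapSeq s p γ α n = α (n % p) := by
  rw [gapSeq, if_neg fun h => hn h.2.2]

theorem mul_le_gapSeq_pow (hs : 1 ≤ s) (hp : 1 < p) (K : ℕ) :
    K * γ ≤ gapSeq s p γ α (p ^ K) := by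
  induction K with
  | zero => simp
  | succ K ih =>
    rw [pow_succ', gapSeq_mul hp (pow_pos (by omega) K)]
    nlinarith

theorem eq_zero_of_gapSeq_lt (hs : 1 ≤ s) (hp : 1 < p) {N d : ℕ}
    (hbdd : ∀ n, N < n → gapSeq s p γ α n < d) : γ = 0 := by
  by_contra hγ
  have hK : N + d < p ^ (N + d) := Nat.lt_pow_self hp
  have := mul_le_gapSeq_pow (α := α) (γ := γ) hs hp (N + d)
  have := hbdd (p ^ (N + d)) (by omega)
  nlinarith [Nat.pos_of_ne_zero hγ]

theorem gapSeq_pow_mul (hp : 1 < p) {n : ℕ} (hn : ¬p ∣ n) (K : ℕ) :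
    gapSeq s p 0 α (p ^ K * n) = s ^ K * α (n % p) := by
  have hn0 : 0 < n := Nat.pos_of_ne_zero fun h => hn (h ▸ dvd_zero p)
  induction K with
  | zero => simp [gapSeq_of_not_dvd hn]
  | succ K ih =>
    rw [pow_succ', mul_assoc, gapSeq_mul hp (by positivity), ih]
    ring

theorem eq_of_gapSeq_periodic (hs : 1 ≤ s) (hp : 1 < p) {N t : ℕ} (ht : 0 < t)
    (hper : ∀ n, N < n → gapSeq s p 0 α (n + t) = gapSeq s p 0 α n)
    {i j : ℕ} (hi : 0 < i) (hip : i < p) (hj : 0 < j) (hjp : j < p) : α i = α j := by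
  obtain ⟨e, r, hr, rfl⟩ := Nat.exists_eq_pow_mul_and_not_dvd ht.ne' p hp.ne'
  have key : ∀ k, 0 < k → k < p → s ^ (N + 1 + e + 1) * α k = s ^ e * α (r % p) := by
    intro k hk hkp
    have hN : N < p ^ (N + 1 + e + 1) * k :=
      (Nat.lt_pow_self hp).trans_le (Nat.le_mul_of_pos_right _ hk) |>.trans' (by omega)
    have hshift : p ^ (N + 1 + e + 1) * k + p ^ e * r
        = p ^ e * (p * (p ^ (N + 1) * k) + r) := by ring
    have hr' : ¬p ∣ p * (p ^ (N + 1) * k) + r := by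
      rwa [Nat.dvd_add_right (dvd_mul_right _ _)]
    have hk' : ¬p ∣ k := Nat.not_dvd_of_pos_of_lt hk hkp
    have := hper _ hN
    rwa [hshift, gapSeq_pow_mul hp hr', gapSeq_pow_mul hp hk', Nat.mul_add_mod,
      Nat.mod_eq_of_lt hkp, eq_comm] at this
  exact Nat.eq_of_mul_eq_mul_left (pow_pos (by omega) _)
    ((key i hi hip).trans (key j hj hjp).symm)

theorem map_gapSeq_range'_mul_add_one (hp : 1 < p) (j : ℕ) :
    (List.range' (p * j + 1) (p - 1)).map (gapSeq s p γ α) = (List.range' 1 (p - 1)).map α := by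
  rw [← List.map_add_range', List.map_map]
  refine List.map_congr_left fun r hr => ?_
  rw [List.mem_range'_1] at hr
  have hr' : r % p = r := Nat.mod_eq_of_lt (by omega)
  rw [Function.comp_apply, gapSeq_of_not_dvd, Nat.mul_add_mod, hr']
  rw [Nat.dvd_add_right (dvd_mul_right _ _)]
  exact Nat.not_dvd_of_pos_of_lt (by omega) (by omega)

theorem map_gapSeq_range'_mul (hp : 1 < p) {j : ℕ} (hj : 0 < j) :
    (List.range' (p * j) p).map (gapSeq s p γ α)
      = (γ + s * gapSeq s p γ α j) :: (List.range' 1 (p - 1)).map α := by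
  conv_lhs => rw [show p = p - 1 + 1 by omega, List.range'_succ, ← show p = p - 1 + 1 by omega]
  rw [List.map_cons, gapSeq_mul hp hj, map_gapSeq_range'_mul_add_one hp]

theorem map_gapSeq_range'_one_mul_add (hp : 1 < p) (M : ℕ) :
    (List.range' 1 (p * M + (p - 1))).map (gapSeq s p γ α)
      = (List.range' 1 (p - 1)).map α ++ ((List.range' 1 M).map (gapSeq s p γ α)).flatMap
          fun g => (γ + s * g) :: (List.range' 1 (p - 1)).map α := by
  induction M with
  | zero => simpa using map_gapSeq_range'_mul_add_one (s := s) (γ := γ) (α := α) hp 0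
  | succ M ih =>
    have hsplit : List.range' 1 (p * (M + 1) + (p - 1))
        = List.range' 1 (p * M + (p - 1)) ++ List.range' (p * (M + 1)) p := by
      rw [show p * (M + 1) = 1 + 1 * (p * M + (p - 1)) by grind, List.range'_append]
      grind
    rw [hsplit, List.map_append, ih, map_gapSeq_range'_mul hp M.succ_pos, List.range'_concat,
      List.map_append, List.flatMap_append]
    simp [add_comm 1 M]

end gapSeq

theorem iterate_applyG_eq {s p γ₁ γ₂ : ℕ} {α : ℕ → ℕ} {h : Bool → Word} (hp : 1 < p)
    (ha : h false = rep s) (hb : h true = rep γ₁ ++ blockWord p α ++ rep γ₂) (n : ℕ) :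
    ∃ L R, (applyG h)^[n] [true]
      = rep L ++ ofGaps ((List.range' 1 (p ^ n - 1)).map (gapSeq s p (γ₁ + γ₂) α)) ++ rep R := by
  induction n with
  | zero => exact ⟨0, 0, rfl⟩
  | succ n ih =>
    obtain ⟨L, R, hLR⟩ := ih
    have hpow : p ^ (n + 1) - 1 = p * (p ^ n - 1) + (p - 1) := by
      have : p ≤ p * p ^ n := Nat.le_mul_of_pos_right p (pow_pos (by omega) n)
      rw [pow_succ', Nat.mul_sub_one]
      omega
    rw [blockWord_eq_ofGaps] at hb
    refine ⟨s * L + γ₁, γ₂ + s * R, ?_⟩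
    rw [Function.iterate_succ_apply', hLR, applyG_append, applyG_append, applyG_rep ha,
      applyG_rep ha, applyG_ofGaps ha hb, hpow, map_gapSeq_range'_one_mul_add hp, rep_add, rep_add]
    simp only [List.append_assoc]

theorem IsOmega.eq_of_getElem?_ofGaps {s p γ₁ γ₂ : ℕ} {α : ℕ → ℕ} {h : Bool → Word}
    {w : ℕ → Bool} (hw : IsOmega h w) (hp : 1 < p) (ha : h false = rep s)
    (hb : h true = rep γ₁ ++ blockWord p α ++ rep γ₂) {n k : ℕ} {x : Bool}
    (hk : (ofGaps ((List.range' 1 (p ^ n - 1)).map (gapSeq s p (γ₁ + γ₂) α)))[k]? = some x) :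
    w k = x := by
  obtain ⟨L, R, hLR⟩ := iterate_applyG_eq hp ha hb n
  have hdrop := dropWhile_rep_append_ofGaps L
    ((List.range' 1 (p ^ n - 1)).map (gapSeq s p (γ₁ + γ₂) α)) (rep R)
  rw [← hLR] at hdrop
  obtain ⟨hlt, rfl⟩ := List.getElem?_eq_some_iff.1 hk
  have := hw n k (by rw [hdrop, List.length_append]; omega)
  simpa only [List.get_eq_getElem, hdrop, List.getElem_append_left hlt] using this.symm

/-- The position of the `m`-th `b` (counting from `0`) in `b a^(A 1) b a^(A 2) b ⋯`. -/
def bPos (A : ℕ → ℕ) : ℕ → ℕ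
  | 0 => 0
  | m + 1 => bPos A m + A (m + 1) + 1

theorem bPos_strictMono (A : ℕ → ℕ) : StrictMono (bPos A) :=
  strictMono_nat_of_lt_succ fun m => by simp only [bPos]; omega

theorem exists_bPos_le_lt (A : ℕ → ℕ) (k : ℕ) : ∃ m, bPos A m ≤ k ∧ k < bPos A (m + 1) := by
  induction k with
  | zero => exact ⟨0, le_rfl, by simp [bPos]⟩
  | succ k ih =>
    obtain ⟨m, h₁, h₂⟩ := ih
    by_cases h : k + 1 < bPos A (m + 1)
    · exact ⟨m, by omega, h⟩
    · refine ⟨m + 1, by omega, ?_⟩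
      simp only [bPos] at *
      omega

theorem length_flatMap_map_range' (A : ℕ → ℕ) (m : ℕ) :
    (((List.range' 1 m).map A).flatMap fun g => true :: rep g).length = bPos A m := by
  induction m with
  | zero => rfl
  | succ m ih =>
    rw [List.range'_concat, List.map_append, List.flatMap_append, List.length_append, ih]
    simp [bPos, rep, add_comm 1 m]
    omega

theorem ofGaps_map_range'_of_lt (A : ℕ → ℕ) {m K : ℕ} (hm : m < K) :
    ∃ v, ofGaps ((List.range' 1 K).map A)
      = ((List.range' 1 m).map A).flatMap (fun g => true :: rep g) ++
          true :: rep (A (m + 1)) ++ v := by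
  obtain ⟨r, rfl⟩ : ∃ r, K = m + 1 + r := ⟨K - m - 1, by omega⟩
  refine ⟨ofGaps ((List.range' (m + 2) r).map A), ?_⟩
  rw [← List.range'_append, List.range'_concat]
  simp [ofGaps, add_comm 1 m, add_comm 1 (m + 1)]

theorem eq_true_iff_mem_range_bPos {w : ℕ → Bool} {A : ℕ → ℕ}
    (hw : ∀ m, ∃ K, m < K ∧
      ∀ k x, (ofGaps ((List.range' 1 K).map A))[k]? = some x → w k = x) (k : ℕ) :
    w k = true ↔ k ∈ Set.range (bPos A) := by
  have hgap : ∀ m i, i ≤ A (m + 1) → w (bPos A m + i) = decide (i = 0) := by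
    intro m i hi
    obtain ⟨K, hmK, hK⟩ := hw m
    obtain ⟨v, hv⟩ := ofGaps_map_range'_of_lt A hmK
    apply hK
    rw [hv, List.append_assoc,
      List.getElem?_append_right (by rw [length_flatMap_map_range']; omega),
      length_flatMap_map_range', Nat.add_sub_cancel_left]
    rcases i with _ | i
    · simp
    · simp [rep, List.getElem?_append_left, show i < A (m + 1) by omega]
  obtain ⟨m, hm₁, hm₂⟩ := exists_bPos_le_lt A k
  obtain ⟨i, rfl⟩ := Nat.exists_eq_add_of_le hm₁
  have hi : i ≤ A (m + 1) := by simp only [bPos] at hm₂; omega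
  rw [hgap m i hi, decide_eq_true_iff]
  constructor
  · rintro rfl
    exact ⟨m, rfl⟩
  · rintro ⟨m', hm'⟩
    have h₁ := (bPos_strictMono A).le_iff_le.1 (hm' ▸ Nat.le_add_right _ _ : bPos A m ≤ bPos A m')
    have h₂ := (bPos_strictMono A).lt_iff_lt.1 (hm' ▸ hm₂)
    obtain rfl : m' = m := by omega
    omega

theorem Nat.count_apply_of_strictMono {P : ℕ → Prop} [DecidablePred P] {f : ℕ → ℕ}
    (hf : StrictMono f) (hP : ∀ k, P k ↔ k ∈ Set.range f) (n : ℕ) : Nat.count P (f n) = n := by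
  have hinf : (Set.ofPred P).Infinite := by
    rw [show Set.ofPred P = Set.range f from Set.ext hP]
    exact Set.infinite_range_of_injective hf.injective
  have hnth :=
    Nat.nth_comp_of_strictMono (n := n) hf (fun k => (hP k).1) fun hfin => absurd hfin hinf
  simp only [hP, Set.mem_range_self, Nat.nth_true] at hnth
  rw [hnth, Nat.count_nth_of_infinite hinf]

/-- The number `t` of points of the range in a window `[x, x + d)` is constant for `x ≥ N`, and
`f m + d = f m'` forces `m' = m + t` by counting. -/
theorem StrictMono.exists_add_eq_add_of_periodic {f : ℕ → ℕ} (hf : StrictMono f) {N d : ℕ}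
    (hd : 0 < d) (hper : ∀ i, N ≤ i → (i + d ∈ Set.range f ↔ i ∈ Set.range f)) :
    ∃ t, 0 < t ∧ ∀ m, N ≤ m → f (m + t) = f m + d := by
  classical
  set P : ℕ → Prop := (· ∈ Set.range f)
  obtain ⟨t, ht⟩ : ∃ t, ∀ x, N ≤ x → Nat.count P (x + d) = Nat.count P x + t := by
    refine ⟨Nat.count P (N + d) - Nat.count P N, fun x hx => ?_⟩
    induction x, hx using Nat.le_induction with
    | base => have := Nat.count_monotone P (show N ≤ N + d by omega); omega
    | succ x hx ih =>
      rw [show x + 1 + d = x + d + 1 by omega, Nat.count_succ, Nat.count_succ, ih]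
      simp only [P, hper x hx]
      omega
  have hcount := Nat.count_apply_of_strictMono hf (P := P) fun _ => Iff.rfl
  have hshift : ∀ m, N ≤ m → f (m + t) = f m + d := by
    intro m hm
    obtain ⟨m', hm'⟩ := (hper _ (hm.trans (hf.id_le m))).2 ⟨m, rfl⟩
    have : m' = m + t := by rw [← hcount m', hm', ht _ (hm.trans (hf.id_le m)), hcount]
    rw [← this, hm']
  refine ⟨t, Nat.pos_of_ne_zero fun h0 => ?_, hshift⟩
  have := hshift N le_rfl
  rw [h0, add_zero] at this
  omega

theorem lt_and_periodic_of_periodic_range_bPos {A : ℕ → ℕ} {N d : ℕ} (hd : 0 < d)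
    (hper : ∀ i, N ≤ i → (i + d ∈ Set.range (bPos A) ↔ i ∈ Set.range (bPos A))) :
    (∀ n, N < n → A n < d) ∧ ∃ t, 0 < t ∧ ∀ n, N < n → A (n + t) = A n := by
  obtain ⟨t, ht, hshift⟩ := (bPos_strictMono A).exists_add_eq_add_of_periodic hd hper
  refine ⟨fun n hn => ?_, t, ht, fun n hn => ?_⟩
  all_goals obtain ⟨m, rfl⟩ : ∃ m, n = m + 1 := ⟨n - 1, by omega⟩
  · have hle := (bPos_strictMono A).monotone (show m + 1 ≤ m + t by omega)
    have := hshift m (by omega)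
    simp only [bPos] at hle
    omega
  · have h₁ := hshift m (by omega)
    have h₂ := hshift (m + 1) (by omega)
    rw [show m + 1 + t = m + t + 1 by omega] at h₂ ⊢
    simp only [bPos] at h₂
    omega

/-- if `ω(h)` is eventually periodic then `γ₁ = γ₂ = 0` and all `α_i`
(`1 ≤ i ≤ p-1`) are equal. -/
theorem stmt9 (s : ℕ) (hs : 1 ≤ s) (p : ℕ) (hp : 2 ≤ p) (γ₁ γ₂ : ℕ) (α : ℕ → ℕ)
    (h : Bool → Word)
    (ha : h false = rep s)
    (hb : h true = rep γ₁ ++ blockWord p α ++ rep γ₂)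
    (w : ℕ → Bool) (hw : IsOmega h w)
    (hper : ∃ N d : ℕ, 1 ≤ d ∧ ∀ i, N ≤ i → w (i + d) = w i) :
    γ₁ = 0 ∧ γ₂ = 0 ∧
      ∀ i j, 1 ≤ i → i ≤ p - 1 → 1 ≤ j → j ≤ p - 1 → α i = α j := by
  obtain ⟨N, d, hd, hper⟩ := hper
  have hmem := eq_true_iff_mem_range_bPos (w := w) (A := gapSeq s p (γ₁ + γ₂) α) fun m =>
    ⟨p ^ (m + 1) - 1, by have := Nat.lt_pow_self (n := m + 1) hp; omega,
      fun _ _ => hw.eq_of_getElem?_ofGaps hp ha hb⟩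
  obtain ⟨hbdd, t, ht, hperiodic⟩ := lt_and_periodic_of_periodic_range_bPos hd fun i hi => by
    rw [← hmem, ← hmem, hper i hi]
  obtain ⟨rfl, rfl⟩ : γ₁ = 0 ∧ γ₂ = 0 := by
    have := eq_zero_of_gapSeq_lt hs hp hbdd
    omega
  exact ⟨rfl, rfl, fun i j hi hip hj hjp =>
    eq_of_gapSeq_periodic hs hp ht hperiodic hi (by omega) hj (by omega)⟩
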